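/- arXiv:1304.0868 — 4 statements merged into one kernel-verified Lean document; each statement's English description precedes it below -/
import Mathlib

section
/- Let E be a finite-dimensional real normed vector space, let A : E → ℝ be a convex and superlinear function, let x₀ ∈ E, let I be a (possibly infinite) index set, and let (Fᵢ)_{i∈I} be a family of flats of A such that x₀ lies in the relative interior of Fᵢ for every i ∈ I. Then there exists a flat F of A which contains Fᵢ for every i ∈ I and which has x₀ in its relative interior. -/
/-!
Take a supporting hyperplane to the epigraph of `A` at `(x₀, A x₀)`: a continuous linear `ℓ`
such that `A - ℓ` attains its minimum at `x₀`. On each flat `Fᵢ` the function `A - ℓ` is affine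
and minimal at the relative interior point `x₀`, so it is constant there; hence every `Fᵢ` lies in
the convex set of minimisers of `A - ℓ`, on which `A` is affine. The flat is the convex hull `G`
of `x₀` and the `Fᵢ`. In finite dimensions, `x₀` lies in the relative interior of a convex set iff
every segment of the set ending at `x₀` can be extended beyond `x₀` inside the set; this property
passes from the `Fᵢ` to `G` because, in a convex set containing `x₀`, the points `y` whose
segment to `x₀` extends beyond `x₀` form a convex set.
-/

open Set AffineMap

section IntrinsicInterior

variable {E : Type*} [NormedAddCommGroup E] [NormedSpace ℝ E] {s : Set E} {x y : E}

theorem Convex.add_smul_sub_mem_intrinsicInterior (hs : Convex ℝ s) (hx : x ∈ s)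
    (hy : y ∈ intrinsicInterior ℝ s) {t : ℝ} (ht : t ∈ Ioc (0 : ℝ) 1) :
    x + t • (y - x) ∈ intrinsicInterior ℝ s := by
  obtain ⟨y', hy', rfl⟩ := hy
  let x' : affineSpan ℝ s := ⟨x, subset_affineSpan ℝ s hx⟩
  have : Nonempty (affineSpan ℝ s) := ⟨x'⟩
  have hcoe : ∀ z, ((homothety x' t z : affineSpan ℝ s) : E) = x + t • ((z : E) - x) := by
    intro z
    simp [homothety_apply, x', add_comm]
  have hmaps : homothety x' t '' ((↑) ⁻¹' s) ⊆ (↑) ⁻¹' s := by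
    rintro - ⟨z, hz, rfl⟩
    rw [mem_preimage, hcoe]
    exact hs.add_smul_sub_mem hx hz ⟨ht.1.le, ht.2⟩
  refine ⟨homothety x' t y', ?_, hcoe y'⟩
  exact interior_maximal ((image_mono interior_subset).trans hmaps)
    (homothety_isOpenMap x' t ht.1.ne' _ isOpen_interior) (mem_image_of_mem _ hy')

theorem exists_pos_add_smul_sub_mem_of_mem_intrinsicInterior (hx : x ∈ intrinsicInterior ℝ s)
    (hy : y ∈ s) : ∃ ε : ℝ, 0 < ε ∧ x + ε • (x - y) ∈ s := by
  obtain ⟨x', hx', rfl⟩ := hx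
  let y' : affineSpan ℝ s := ⟨y, subset_affineSpan ℝ s hy⟩
  have : Nonempty (affineSpan ℝ s) := ⟨y'⟩
  obtain ⟨δ, hδs, hδ⟩ := ((eventually_homothety_mem_of_mem_interior ℝ y' hx').filter_mono
    nhdsWithin_le_nhds |>.and (self_mem_nhdsWithin (s := Ioi (1 : ℝ)))).exists
  refine ⟨δ - 1, sub_pos.2 hδ, ?_⟩
  have hcoe : ((homothety y' δ x' : affineSpan ℝ s) : E) = x' + (δ - 1) • ((x' : E) - y) := by
    simp only [homothety_apply, AffineSubspace.coe_vadd, AffineSubspace.coe_vsub,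
      SetLike.val_smul, vsub_eq_sub, vadd_eq_add, y']
    module
  exact hcoe ▸ hδs

theorem Convex.mem_intrinsicInterior_of_forall_exists_pos_add_smul_sub_mem
    [FiniteDimensional ℝ E] (hs : Convex ℝ s) (hx : x ∈ s)
    (h : ∀ y ∈ s, ∃ ε : ℝ, 0 < ε ∧ x + ε • (x - y) ∈ s) : x ∈ intrinsicInterior ℝ s := by
  obtain ⟨z, hz⟩ := Set.Nonempty.intrinsicInterior hs ⟨x, hx⟩
  obtain ⟨ε, hε, hw⟩ := h z (intrinsicInterior_subset hz)
  convert hs.add_smul_sub_mem_intrinsicInterior hw hz (t := ε / (1 + ε))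
    ⟨by positivity, (div_le_one (by positivity)).2 (by linarith)⟩ using 1
  match_scalars <;> field_simp <;> ring

theorem Convex.convex_setOf_exists_pos_add_smul_sub_mem (hs : Convex ℝ s) (hx : x ∈ s) :
    Convex ℝ {y | ∃ ε : ℝ, 0 < ε ∧ x + ε • (x - y) ∈ s} := by
  have mono : ∀ y (ε δ : ℝ), 0 < δ → δ ≤ ε → x + ε • (x - y) ∈ s → x + δ • (x - y) ∈ s := by
    intro y ε δ hδ hδε hmem
    have hε : 0 < ε := hδ.trans_le hδε
    convert hs.add_smul_sub_mem hx hmem (t := δ / ε) ⟨by positivity, (div_le_one hε).2 hδε⟩ using 1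
    match_scalars <;> field_simp
    ring
  rintro y ⟨ε, hε, hy⟩ z ⟨δ, hδ, hz⟩ a b ha hb hab
  refine ⟨min ε δ, lt_min hε hδ, ?_⟩
  convert hs (mono y _ _ (lt_min hε hδ) (min_le_left ε δ) hy)
    (mono z _ _ (lt_min hε hδ) (min_le_right ε δ) hz) ha hb hab using 1
  obtain rfl : b = 1 - a := by linarith
  module

theorem mem_intrinsicInterior_convexHull_insert_iUnion [FiniteDimensional ℝ E] {ι : Type*}
    {F : ι → Set E} (hF : ∀ i, x ∈ intrinsicInterior ℝ (F i)) :
    x ∈ intrinsicInterior ℝ (convexHull ℝ (insert x (⋃ i, F i))) := by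
  have hconv := convex_convexHull ℝ (insert x (⋃ i, F i))
  have hx : x ∈ convexHull ℝ (insert x (⋃ i, F i)) := subset_convexHull ℝ _ (mem_insert x _)
  refine hconv.mem_intrinsicInterior_of_forall_exists_pos_add_smul_sub_mem hx
    fun y hy ↦ convexHull_min ?_ (hconv.convex_setOf_exists_pos_add_smul_sub_mem hx) hy
  rintro y (rfl | hy)
  · exact ⟨1, one_pos, by simpa using hx⟩
  · obtain ⟨i, hi⟩ := mem_iUnion.1 hy
    obtain ⟨ε, hε, hmem⟩ := exists_pos_add_smul_sub_mem_of_mem_intrinsicInterior (hF i) hi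
    exact ⟨ε, hε, subset_convexHull ℝ _ (mem_insert_of_mem _ (mem_iUnion_of_mem i hmem))⟩

theorem LinearMap.eq_of_isMinOn_of_mem_intrinsicInterior (L : E →ₗ[ℝ] ℝ) {x₀ : E}
    (hmin : IsMinOn L s x₀) (hx₀ : x₀ ∈ intrinsicInterior ℝ s) (hx : x ∈ s) : L x = L x₀ := by
  obtain ⟨ε, hε, hmem⟩ := exists_pos_add_smul_sub_mem_of_mem_intrinsicInterior hx₀ hx
  have h₁ : L x₀ ≤ L x := hmin hx
  have h₂ : L x₀ ≤ L (x₀ + ε • (x₀ - x)) := hmin hmem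
  rw [map_add, map_smul, map_sub, smul_eq_mul, le_add_iff_nonneg_right,
    mul_nonneg_iff_of_pos_left hε, sub_nonneg] at h₂
  exact le_antisymm h₂ h₁

end IntrinsicInterior

theorem ConvexOn.exists_subgradient {E : Type*} [NormedAddCommGroup E] [NormedSpace ℝ E]
    {f : E → ℝ} (hf : ConvexOn ℝ univ f) (hc : Continuous f) (x₀ : E) :
    ∃ ℓ : E →L[ℝ] ℝ, ∀ x, f x₀ + ℓ (x - x₀) ≤ f x := by
  have hopen : IsOpen {p : E × ℝ | p.1 ∈ univ ∧ f p.1 < p.2} := by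
    simpa using isOpen_lt (hc.comp continuous_fst) continuous_snd
  obtain ⟨φ, hφ⟩ := geometric_hahn_banach_open_point hf.convex_strict_epigraph hopen
    (x := (x₀, f x₀)) (by simp)
  set c := φ (0, 1)
  have hφ_apply : ∀ v t, φ (v, t) = φ (v, 0) + t * c := fun v t ↦ by
    rw [← smul_eq_mul, ← map_smul, ← map_add, Prod.smul_mk, smul_zero, smul_eq_mul, mul_one,
      Prod.mk_add_mk, add_zero, zero_add]
  have hc : c < 0 := by
    have := hφ (x₀, f x₀ + 1) (by simp)
    rw [hφ_apply, hφ_apply x₀ (f x₀)] at this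
    linarith
  refine ⟨-c⁻¹ • φ.comp (ContinuousLinearMap.inl ℝ E ℝ), fun x ↦ ?_⟩
  refine le_of_forall_gt_imp_ge_of_dense fun t ht ↦ ?_
  have hsep := hφ (x, t) (by simpa using ht)
  rw [hφ_apply, hφ_apply x₀ (f x₀)] at hsep
  have hsub : φ (x - x₀, 0) ≤ (f x₀ - t) * c := by
    rw [← sub_zero (0 : ℝ), ← Prod.mk_sub_mk, map_sub]
    linarith
  have := (le_div_iff_of_neg hc).2 hsub
  simp only [smul_apply, ContinuousLinearMap.comp_apply, ContinuousLinearMap.inl_apply,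
    smul_eq_mul]
  rw [neg_mul, ← div_eq_inv_mul]
  linarith

theorem flats_with_common_relint_point_contained_in_flat_general
    {E : Type*} [NormedAddCommGroup E] [NormedSpace ℝ E] [FiniteDimensional ℝ E]
    (A : E → ℝ)
    (hA_conv : ConvexOn ℝ Set.univ A)
    (x₀ : E) {I : Type*} (F : I → Set E)
    (hF_flat : ∀ i : I, Convex ℝ (F i) ∧
      ∃ (ℓ : E →L[ℝ] ℝ) (b : ℝ), ∀ x ∈ F i, A x = ℓ x + b)
    (hx₀ : ∀ i : I, x₀ ∈ intrinsicInterior ℝ (F i)) :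
    ∃ G : Set E,
      (Convex ℝ G ∧ ∃ (ℓ : E →L[ℝ] ℝ) (b : ℝ), ∀ x ∈ G, A x = ℓ x + b) ∧
      (∀ i : I, F i ⊆ G) ∧ x₀ ∈ intrinsicInterior ℝ G := by
  obtain ⟨ℓ, hℓ⟩ :=
    hA_conv.exists_subgradient (continuousOn_univ.1 (hA_conv.continuousOn isOpen_univ)) x₀
  have hmin : ∀ x, A x₀ - ℓ x₀ ≤ A x - ℓ x := fun x ↦ by linarith [hℓ x, map_sub ℓ x x₀]
  set M := {x | A x - ℓ x ≤ A x₀ - ℓ x₀}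
  have hM : Convex ℝ M := by
    convert (hA_conv.sub (ℓ.toLinearMap.concaveOn convex_univ)).convex_le (A x₀ - ℓ x₀)
    simp
  have hFM : ∀ i, F i ⊆ M := by
    intro i x hx
    obtain ⟨ℓi, bi, hi⟩ := (hF_flat i).2
    have hx₀i := intrinsicInterior_subset (hx₀ i)
    have hmin_i : IsMinOn (ℓi - ℓ).toLinearMap (F i) x₀ := fun y hy ↦ by
      show ℓi x₀ - ℓ x₀ ≤ ℓi y - ℓ y
      linarith [hmin y, hi y hy, hi x₀ hx₀i]
    have hconst : ℓi x - ℓ x = ℓi x₀ - ℓ x₀ :=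
      (ℓi - ℓ).toLinearMap.eq_of_isMinOn_of_mem_intrinsicInterior hmin_i (hx₀ i) hx
    show A x - ℓ x ≤ A x₀ - ℓ x₀
    linarith [hi x hx, hi x₀ hx₀i]
  have hGM : convexHull ℝ (insert x₀ (⋃ i, F i)) ⊆ M :=
    convexHull_min (insert_subset (le_refl (A x₀ - ℓ x₀)) (iUnion_subset hFM)) hM
  refine ⟨convexHull ℝ (insert x₀ (⋃ i, F i)), ⟨convex_convexHull ℝ _, ℓ, A x₀ - ℓ x₀, ?_⟩,
    fun i ↦ (subset_iUnion F i).trans ((subset_insert _ _).trans (subset_convexHull ℝ _)),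
    mem_intrinsicInterior_convexHull_insert_iUnion hx₀⟩
  intro x hx
  have hxM : A x - ℓ x ≤ A x₀ - ℓ x₀ := hGM hx
  linarith [hmin x]

/-- Existence of a flat of a convex superlinear function containing a
family of flats, each having `x₀` in its relative interior, with `x₀` in its
relative interior. -/
theorem flats_with_common_relint_point_contained_in_flat
    {E : Type*} [NormedAddCommGroup E] [NormedSpace ℝ E] [FiniteDimensional ℝ E]
    (A : E → ℝ)
    (hA_conv : ConvexOn ℝ Set.univ A)
    (hA_sl : ∀ K : ℝ, 0 ≤ K → ∃ C : ℝ, ∀ x : E, K * ‖x‖ - C ≤ A x)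
    (x₀ : E) {I : Type*} (F : I → Set E)
    (hF_flat : ∀ i : I, Convex ℝ (F i) ∧
      ∃ (ℓ : E →L[ℝ] ℝ) (b : ℝ), ∀ x ∈ F i, A x = ℓ x + b)
    (hx₀ : ∀ i : I, x₀ ∈ intrinsicInterior ℝ (F i)) :
    ∃ G : Set E,
      (Convex ℝ G ∧ ∃ (ℓ : E →L[ℝ] ℝ) (b : ℝ), ∀ x ∈ G, A x = ℓ x + b) ∧
      (∀ i : I, F i ⊆ G) ∧ x₀ ∈ intrinsicInterior ℝ G :=
  flats_with_common_relint_point_contained_in_flat_general A hA_conv x₀ F hF_flat hx₀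
end

section
/- Let E be a finite-dimensional real inner product space, let A : E → ℝ be a convex and superlinear function, let x ∈ E, and let y ∈ E be a subgradient of A at x. Then for every flat F of A containing x in its relative interior, y is a subgradient of A at every point x' of F. -/
/-!
Given `x' ∈ F`, the line from `x'` through `x` stays in `F` a little beyond `x`, up to some
`x''`, because `x` lies in the relative interior of `F`. On the segment `[x', x'']` the function
`A` is affine, and the affine minorant `z ↦ A x + ⟪y, z - x⟫` touches it at the inner point `x`;
two affine functions on a segment, one below the other and equal at an inner point, agree, so
the minorant also touches `A` at `x'`, which makes `y` a subgradient there.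
-/

open RealInnerProductSpace Filter Topology

theorem eventually_lineMap_mem_of_mem_intrinsicInterior
    {E : Type*} [NormedAddCommGroup E] [NormedSpace ℝ E] {F : Set E} {x x' : E}
    (hxF : x ∈ intrinsicInterior ℝ F) (hx' : x' ∈ F) :
    ∀ᶠ t in 𝓝 (1 : ℝ), AffineMap.lineMap x' x t ∈ F := by
  obtain ⟨w, hw_int, rfl⟩ := mem_intrinsicInterior.mp hxF
  let γ : ℝ → affineSpan ℝ F := fun t =>
    ⟨AffineMap.lineMap x' (w : E) t, AffineMap.lineMap_mem t (subset_affineSpan ℝ F hx') w.2⟩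
  have hγ : Continuous γ := by fun_prop
  have hγ_one : γ 1 = w := Subtype.ext (AffineMap.lineMap_apply_one _ _)
  have hF_nhds : (↑) ⁻¹' F ∈ 𝓝 (γ 1) := hγ_one ▸ mem_interior_iff_mem_nhds.mp hw_int
  exact (hγ.tendsto 1).eventually hF_nhds

section Subgradient

variable {E : Type*} [NormedAddCommGroup E] [InnerProductSpace ℝ E]

def IsSubgradientAt (A : E → ℝ) (x y : E) : Prop :=
  ∀ z, A x + ⟪y, z - x⟫ ≤ A z

variable {A : E → ℝ} {x x' y : E}

theorem IsSubgradientAt.of_le_add_inner (hy : IsSubgradientAt A x y)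
    (hx' : A x' ≤ A x + ⟪y, x' - x⟫) : IsSubgradientAt A x' y := fun z => by
  have h_split : ⟪y, z - x⟫ = ⟪y, z - x'⟫ + ⟪y, x' - x⟫ := by
    rw [← inner_add_right, sub_add_sub_cancel]
  linarith [hy z]

theorem IsSubgradientAt.le_add_inner_of_lineMap (hy : IsSubgradientAt A x y)
    (ℓ : E →ₗ[ℝ] ℝ) (b : ℝ) {S : Set E} (hA : ∀ u ∈ S, A u = ℓ u + b)
    (hx : x ∈ S) (hx' : x' ∈ S) {t : ℝ} (ht : 1 < t) (htS : AffineMap.lineMap x' x t ∈ S) :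
    A x' ≤ A x + ⟪y, x' - x⟫ := by
  have h_sub : AffineMap.lineMap x' x t - x = (t - 1) • (x - x') := by
    rw [AffineMap.lineMap_apply_module']
    module
  have h_inner : ⟪y, x' - x⟫ = -⟪y, x - x'⟫ := by
    rw [← inner_neg_right, neg_sub]
  have h_affine : A (AffineMap.lineMap x' x t) = A x' + t * (A x - A x') := by
    rw [hA _ htS, hA _ hx, hA _ hx', AffineMap.lineMap_apply_module', map_add, map_smul,
      map_sub, smul_eq_mul]
    ring
  have h_at := hy (AffineMap.lineMap x' x t)
  rw [h_affine, h_sub, real_inner_smul_right] at h_at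
  have h_scaled : (t - 1) * (A x' - (A x + ⟪y, x' - x⟫)) ≤ 0 := by
    rw [h_inner]
    linarith
  exact sub_nonpos.mp (nonpos_of_mul_nonpos_right h_scaled (sub_pos.mpr ht))

end Subgradient

theorem subgradient_on_flat_general
    {E : Type*} [NormedAddCommGroup E] [InnerProductSpace ℝ E]
    (A : E → ℝ)
    (x y : E)
    (hy : ∀ z : E, A x + ⟪y, z - x⟫ ≤ A z)
    (F : Set E)
    (hF_affine : ∃ (ℓ : E →L[ℝ] ℝ) (b : ℝ), ∀ u ∈ F, A u = ℓ u + b)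
    (hxF : x ∈ intrinsicInterior ℝ F) :
    ∀ x' ∈ F, ∀ z : E, A x' + ⟪y, z - x'⟫ ≤ A z := by
  intro x' hx'
  obtain ⟨ℓ, b, hA⟩ := hF_affine
  obtain ⟨t, htF, ht⟩ := ((eventually_lineMap_mem_of_mem_intrinsicInterior hxF hx').filter_mono
    nhdsWithin_le_nhds |>.and self_mem_nhdsWithin).exists (f := 𝓝[>] (1 : ℝ))
  have hy : IsSubgradientAt A x y := hy
  exact hy.of_le_add_inner
    (hy.le_add_inner_of_lineMap ℓ b hA (intrinsicInterior_subset hxF) hx' ht htF)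

/-- A subgradient at a point in the relative interior of a flat of a
convex superlinear function is a subgradient at every point of the flat. -/
theorem subgradient_on_flat
    {E : Type*} [NormedAddCommGroup E] [InnerProductSpace ℝ E] [FiniteDimensional ℝ E]
    (A : E → ℝ)
    (hA_conv : ConvexOn ℝ Set.univ A)
    (hA_sl : ∀ K : ℝ, 0 ≤ K → ∃ C : ℝ, ∀ x : E, K * ‖x‖ - C ≤ A x)
    (x y : E)
    (hy : ∀ z : E, A x + ⟪y, z - x⟫ ≤ A z)
    (F : Set E)
    (hF_conv : Convex ℝ F)
    (hF_affine : ∃ (ℓ : E →L[ℝ] ℝ) (b : ℝ), ∀ u ∈ F, A u = ℓ u + b)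
    (hxF : x ∈ intrinsicInterior ℝ F) :
    ∀ x' ∈ F, ∀ z : E, A x' + ⟪y, z - x'⟫ ≤ A z :=
  subgradient_on_flat_general A x y hy F hF_affine hxF
end

section
/- Let E be a finite-dimensional real inner product space and let A : E → ℝ be a convex and superlinear function. Then for every y ∈ E the supremum sup_{x ∈ E} (⟪y, x⟫ − A x) is finite and is attained: there exists x ∈ E such that ⟪y, x⟫ − A x ≥ ⟪y, z⟫ − A z for all z ∈ E. Equivalently, every y ∈ E is a subgradient of A at some point of E. -/
/-!
The function `x ↦ A x - ⟪y, x⟫` is continuous, since a convex function on a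
finite-dimensional space is, and it tends to `+∞` at infinity, since superlinear growth of `A`
with slope `‖y‖ + 1` beats the linear term. So it attains its minimum at some `x`, which
maximises `⟪y, ·⟫ - A` and is a point at which `y` is a subgradient of `A`.
-/

open Filter Bornology RealInnerProductSpace

section Superlinear

variable {E : Type*} [NormedAddCommGroup E]

def Superlinear (A : E → ℝ) : Prop :=
  ∀ K : ℝ, 0 ≤ K → ∃ C : ℝ, ∀ x : E, K * ‖x‖ - C ≤ A x

theorem Superlinear.tendsto_sub_inner_cobounded_atTop [InnerProductSpace ℝ E] {A : E → ℝ}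
    (hA : Superlinear A) (y : E) :
    Tendsto (fun x => A x - ⟪y, x⟫) (cobounded E) atTop := by
  obtain ⟨C, hC⟩ := hA (‖y‖ + 1) (by positivity)
  have bound : ∀ x : E, ‖x‖ + -C ≤ A x - ⟪y, x⟫ := fun x => by
    nlinarith [real_inner_le_norm y x, hC x]
  exact tendsto_atTop_mono bound (tendsto_atTop_add_const_right _ _ tendsto_norm_cobounded_atTop)

theorem ConvexOn.exists_forall_sub_inner_le_of_superlinear [InnerProductSpace ℝ E]
    [FiniteDimensional ℝ E] {A : E → ℝ} (hA_conv : ConvexOn ℝ Set.univ A)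
    (hA_sl : Superlinear A) (y : E) :
    ∃ x : E, ∀ z : E, A x - ⟪y, x⟫ ≤ A z - ⟪y, z⟫ := by
  have hcont : Continuous fun x => A x - ⟪y, x⟫ :=
    hA_conv.locallyLipschitz.continuous.sub (continuous_const.inner continuous_id)
  exact hcont.exists_forall_le <|
    Metric.cobounded_eq_cocompact (α := E) ▸ hA_sl.tendsto_sub_inner_cobounded_atTop y

end Superlinear

/-- For a convex superlinear function `A` on a finite-dimensional inner
product space, the supremum defining the Fenchel conjugate is finite and attained at
every `y`; equivalently every `y` is a subgradient of `A` at some point. -/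
theorem fenchel_sup_attained
    {E : Type*} [NormedAddCommGroup E] [InnerProductSpace ℝ E] [FiniteDimensional ℝ E]
    (A : E → ℝ)
    (hA_conv : ConvexOn ℝ Set.univ A)
    (hA_sl : ∀ K : ℝ, 0 ≤ K → ∃ C : ℝ, ∀ x : E, K * ‖x‖ - C ≤ A x)
    (y : E) :
    BddAbove (Set.range fun x : E => ⟪y, x⟫ - A x) ∧
    (∃ x : E, ∀ z : E, ⟪y, z⟫ - A z ≤ ⟪y, x⟫ - A x) ∧
    (∃ x : E, ∀ z : E, A x + ⟪y, z - x⟫ ≤ A z) := by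
  obtain ⟨x, hx⟩ := hA_conv.exists_forall_sub_inner_le_of_superlinear hA_sl y
  have hmax : ∀ z : E, ⟪y, z⟫ - A z ≤ ⟪y, x⟫ - A x := fun z => by linarith [hx z]
  refine ⟨⟨_, Set.forall_mem_range.mpr hmax⟩, ⟨x, hmax⟩, ⟨x, fun z => ?_⟩⟩
  rw [inner_sub_right]
  linarith [hx z]
end

section
/- Let b be a natural number, let v ∈ ℝ^b, let n be a nonzero integer, and let π : ℝ^b → ℝ^b/ℤ^b be the quotient map onto the torus (the quotient of the additive group ℝ^b by the subgroup ℤ^b of integer vectors). Let T be the topological closure in ℝ^b/ℤ^b of the subgroup generated by π(v), and let T' be the topological closure of the subgroup generated by π(n • v). Then T' is a subgroup of T, and T' has finite index in T; moreover this index divides |n|. -/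
/-!
Write `H = ⟨a⟩` and `H' = ⟨n • a⟩`, so that `[H : H'] ∣ |n|`. If `K` is a closed subgroup, the coset
space `G ⧸ K` is T1; the cosets of `K` meeting `H` are dense among those meeting `closure H`, and
when there are finitely many of them they form a closed set, so `[closure H : K] = [H : K]`.
With `K = closure H' ⊇ H'` this gives `[closure H : closure H'] = [H : closure H'] ∣ [H : H'] ∣ |n|`.
-/

namespace Subgroup

variable {G : Type*} [Group G] [TopologicalSpace G] [IsTopologicalGroup G]

@[to_additive]
theorem relIndex_topologicalClosure_right_of_isClosed (H : Subgroup G) {K : Subgroup G}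
    (hK : IsClosed (K : Set G)) : K.relIndex H.topologicalClosure = K.relIndex H := by
  have hle := H.le_topologicalClosure
  by_cases hH : K.relIndex H = 0
  · rw [hH, relIndex_eq_zero_of_le_right hle hH]
  have : Finite (H ⧸ K.subgroupOf H) := Nat.finite_of_card_ne_zero hH
  have : IsClosed (K.subgroupOf H.topologicalClosure : Set H.topologicalClosure) :=
    hK.preimage continuous_subtype_val
  set e := quotientSubgroupOfEmbeddingOfLE K hle
  have hdense : DenseRange e := by
    have hinc : DenseRange (inclusion hle) :=
      (denseRange_inclusion_iff (s := (H : Set G)) hle).2 (H.topologicalClosure_coe ▸ subset_rfl)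
    have hcomm : e ∘ QuotientGroup.mk = QuotientGroup.mk ∘ inclusion hle :=
      funext (quotientSubgroupOfEmbeddingOfLE_apply_mk K hle)
    refine DenseRange.of_comp (g := QuotientGroup.mk) ?_
    rw [hcomm]
    exact QuotientGroup.mk_surjective.denseRange.comp hinc QuotientGroup.continuous_mk
  have hsurj : Function.Surjective e := by
    rw [← Set.range_eq_univ, ← hdense.closure_range, (Set.finite_range e).isClosed.closure_eq]
  exact (Nat.card_congr (Equiv.ofBijective e ⟨e.injective, hsurj⟩)).symm

end Subgroup

namespace AddSubgroup

theorem relIndex_zmultiples_zsmul_dvd {G : Type*} [AddGroup G] (a : G) (n : ℤ) :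
    (zmultiples (n • a)).relIndex (zmultiples a) ∣ n.natAbs := by
  set f := zmultiplesHom G a
  have hmap (k : ℤ) : (zmultiples k).map f = zmultiples (k • a) := by
    simp [AddMonoidHom.map_zmultiples, f]
  calc (zmultiples (n • a)).relIndex (zmultiples a)
      = (zmultiples (n • a)).relIndex ((zmultiples (1 : ℤ)).map f) := by rw [hmap, one_zsmul]
    _ = ((zmultiples (n • a)).comap f).relIndex (zmultiples 1) := (relIndex_comap _ f _).symm
    _ ∣ (zmultiples n).relIndex (zmultiples 1) :=
      relIndex_dvd_of_le_left _ (hmap n ▸ le_comap_map f _)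
    _ = n.natAbs := by rw [Int.zmultiples_one, relIndex_top_right, Int.index_zmultiples]

end AddSubgroup

open AddSubgroup

theorem closure_of_multiples_finite_index_general
    (b : ℕ) (v : Fin b → ℝ) (n : ℤ) (hn : n ≠ 0)
    (L : AddSubgroup (Fin b → ℝ))
    (π : (Fin b → ℝ) →+ (Fin b → ℝ) ⧸ L)
    (T T' : AddSubgroup ((Fin b → ℝ) ⧸ L))
    (hT : T = (AddSubgroup.zmultiples (π v)).topologicalClosure)
    (hT' : T' = (AddSubgroup.zmultiples (π (n • v))).topologicalClosure) :
    T' ≤ T ∧ T'.relIndex T ≠ 0 ∧ T'.relIndex T ∣ n.natAbs := by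
  rw [map_zsmul] at hT'
  subst hT hT'
  set H := zmultiples (π v)
  set H' := zmultiples (n • π v)
  have hdvd : H'.topologicalClosure.relIndex H.topologicalClosure ∣ n.natAbs := by
    rw [relIndex_topologicalClosure_right_of_isClosed _ H'.isClosed_topologicalClosure]
    exact (relIndex_dvd_of_le_left H H'.le_topologicalClosure).trans
      (relIndex_zmultiples_zsmul_dvd _ n)
  exact ⟨topologicalClosure_mono (zmultiples_le_of_mem (zsmul_mem (mem_zmultiples _) n)),
    (Nat.pos_of_dvd_of_pos hdvd (Int.natAbs_pos.mpr hn)).ne', hdvd⟩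

/-- In the torus `ℝ^b/ℤ^b`, the closure `T'` of the subgroup generated
by `n • v` (for `n` a nonzero integer) is a finite-index subgroup of the closure `T`
of the subgroup generated by `v`, and the index divides `|n|`. -/
theorem closure_of_multiples_finite_index
    (b : ℕ) (v : Fin b → ℝ) (n : ℤ) (hn : n ≠ 0)
    (L : AddSubgroup (Fin b → ℝ))
    (hL : (L : Set (Fin b → ℝ)) = {x : Fin b → ℝ | ∀ i : Fin b, ∃ m : ℤ, x i = (m : ℝ)})
    (π : (Fin b → ℝ) →+ (Fin b → ℝ) ⧸ L)
    (hπ : π = QuotientAddGroup.mk' L)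
    (T T' : AddSubgroup ((Fin b → ℝ) ⧸ L))
    (hT : T = (AddSubgroup.zmultiples (π v)).topologicalClosure)
    (hT' : T' = (AddSubgroup.zmultiples (π (n • v))).topologicalClosure) :
    T' ≤ T ∧ T'.relIndex T ≠ 0 ∧ T'.relIndex T ∣ n.natAbs :=
  closure_of_multiples_finite_index_general b v n hn L π T T' hT hT'
end
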